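/- For any stabilizing constant κ > 0, any time step τ > 0, any initial grid function u_init, and every n ≥ 0, the GSAV-EI2 iterates satisfy sⁿ ≤ E_h(u_init) and s̃^{n+1} ≤ E_h(u_init), where E_h(v) := (ε²/2)‖∇_h v‖² + E_{1h}(v). -/

import Mathlib

open scoped BigOperators
noncomputable section

/-- Grid functions on the `M × M` periodic mesh, identified with vectors in `ℝ^{M²}`.
The sup norm of this Pi type is the discrete `L^∞` (maximum) norm. -/
abbrev GridFun (M : ℕ) : Type := Fin M × Fin M → ℝ

/-- Discrete inner product `⟨v,w⟩ = h² Σ_{i,j} v_{ij} w_{ij}`. -/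
def gridInner (M : ℕ) (h : ℝ) (v w : GridFun M) : ℝ :=
  h ^ 2 * ∑ p : Fin M × Fin M, v p * w p

/-- Discrete `L²` norm `‖v‖ = ⟨v,v⟩^{1/2}`. -/
def gridNorm (M : ℕ) (h : ℝ) (v : GridFun M) : ℝ :=
  Real.sqrt (gridInner M h v v)

/-- The discrete Laplacian as a linear map (periodic indexing via `Fin M` arithmetic). -/
def dLapL (M : ℕ) [NeZero M] (h : ℝ) : GridFun M →ₗ[ℝ] GridFun M where
  toFun v := fun p =>
    (v (p.1 + 1, p.2) + v (p.1 - 1, p.2) + v (p.1, p.2 + 1) + v (p.1, p.2 - 1) - 4 * v p) / h ^ 2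
  map_add' v w := by funext p; simp only [Pi.add_apply]; ring
  map_smul' c v := by funext p; simp only [Pi.smul_apply, smul_eq_mul, RingHom.id_apply]; ring

/-- The discrete Laplacian `Δ_h` as a continuous linear map on `ℝ^{M²}`. -/
def dLap (M : ℕ) [NeZero M] (h : ℝ) : GridFun M →L[ℝ] GridFun M :=
  LinearMap.toContinuousLinearMap (dLapL M h)

/-- Bulk energy `E_{1h}(v) = h² Σ F(v_{ij})`. -/
def E1h (M : ℕ) (h : ℝ) (F : ℝ → ℝ) (v : GridFun M) : ℝ :=
  h ^ 2 * ∑ p : Fin M × Fin M, F (v p)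

/-- Discrete gradient energy `(ε²/2) ‖∇_h v‖²`. -/
def gradE (M : ℕ) [NeZero M] (h ε : ℝ) (v : GridFun M) : ℝ :=
  ε ^ 2 / 2 * (h ^ 2 * ∑ p : Fin M × Fin M,
    (((v (p.1 + 1, p.2) - v p) / h) ^ 2 + ((v (p.1, p.2 + 1) - v p) / h) ^ 2))

/-- Modified energy `𝓔_h(v, r) = (ε²/2)‖∇_h v‖² + r`. -/
def modE (M : ℕ) [NeZero M] (h ε : ℝ) (v : GridFun M) (r : ℝ) : ℝ :=
  gradE M h ε v + r

/-- Discrete energy `E_h(v) = (ε²/2)‖∇_h v‖² + E_{1h}(v)`. -/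
def Eh (M : ℕ) [NeZero M] (h ε : ℝ) (F : ℝ → ℝ) (v : GridFun M) : ℝ :=
  gradE M h ε v + E1h M h F v

/-- `g(v, r) = σ(r) / σ(E_{1h}(v))`. -/
def gFun (M : ℕ) (h : ℝ) (F σ : ℝ → ℝ) (v : GridFun M) (r : ℝ) : ℝ :=
  σ r / σ (E1h M h F v)

/-- The linear operator `L_κ = κ g₀ I − ε² Δ_h`. -/
def Lkappa (M : ℕ) [NeZero M] (h ε κ g0 : ℝ) : GridFun M →L[ℝ] GridFun M :=
  (κ * g0) • (1 : GridFun M →L[ℝ] GridFun M) - ε ^ 2 • dLap M h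

/-- The nonlinear operator `N_κ(v, r) = g(v,r) f(v) + κ g₀ v` (with `f` applied entrywise). -/
def Nkappa (M : ℕ) (h κ g0 : ℝ) (f F σ : ℝ → ℝ) (v : GridFun M) (r : ℝ) : GridFun M :=
  fun p => gFun M h F σ v r * f (v p) + κ * g0 * v p

/-- One step of the GSAV-EI1 scheme. -/
def EI1step (M : ℕ) [NeZero M] (h ε κ τ : ℝ) (f F σ : ℝ → ℝ) (us : GridFun M × ℝ) :
    GridFun M × ℝ :=
  let g0 := gFun M h F σ us.1 us.2
  let Lk := Lkappa M h ε κ g0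
  let u1 := (NormedSpace.exp (-(τ • Lk))) us.1
    + (∫ θ in (0:ℝ)..τ, NormedSpace.exp (-((τ - θ) • Lk))) (Nkappa M h κ g0 f F σ us.1 us.2)
  (u1, us.2 - g0 * gridInner M h (fun p => f (us.1 p)) (u1 - us.1))

/-- The GSAV-EI1 iterates `(uⁿ, sⁿ)`. -/
def EI1 (M : ℕ) [NeZero M] (h ε κ τ : ℝ) (f F σ : ℝ → ℝ) (uinit : GridFun M) :
    ℕ → GridFun M × ℝ
  | 0 => (uinit, E1h M h F uinit)
  | n + 1 => EI1step M h ε κ τ f F σ (EI1 M h ε κ τ f F σ uinit n)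

/-- The midpoint values `(ũ^{n+1/2}, s̃^{n+1/2})` of the GSAV-EI2 scheme, as a function of
`(uⁿ, sⁿ)`; the prediction `(ũ^{n+1}, s̃^{n+1})` is a GSAV-EI1 step. -/
def EI2half (M : ℕ) [NeZero M] (h ε κ τ : ℝ) (f F σ : ℝ → ℝ) (us : GridFun M × ℝ) :
    GridFun M × ℝ :=
  let t := EI1step M h ε κ τ f F σ us
  ((1 / 2 : ℝ) • (us.1 + t.1), (us.2 + t.2) / 2)

/-- One step of the GSAV-EI2 scheme. -/
def EI2step (M : ℕ) [NeZero M] (h ε κ τ : ℝ) (f F σ : ℝ → ℝ) (us : GridFun M × ℝ) :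
    GridFun M × ℝ :=
  let t := EI1step M h ε κ τ f F σ us
  let m := EI2half M h ε κ τ f F σ us
  let gh := gFun M h F σ m.1 m.2
  let Lk := Lkappa M h ε κ gh
  let u1 := (NormedSpace.exp (-(τ • Lk))) us.1
    + (∫ θ in (0:ℝ)..τ, NormedSpace.exp (-((τ - θ) • Lk))) (Nkappa M h κ gh f F σ m.1 m.2)
  (u1, us.2 - gh * gridInner M h (fun p => f (m.1 p)) (u1 - us.1)
        + κ / 2 * gh * gridInner M h (u1 - t.1) (u1 - us.1))

/-- The GSAV-EI2 iterates `(uⁿ, sⁿ)`. -/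
def EI2 (M : ℕ) [NeZero M] (h ε κ τ : ℝ) (f F σ : ℝ → ℝ) (uinit : GridFun M) :
    ℕ → GridFun M × ℝ
  | 0 => (uinit, E1h M h F uinit)
  | n + 1 => EI2step M h ε κ τ f F σ (EI2 M h ε κ τ f F σ uinit n)

/-- One step of the stabilized generalized-SAV scheme (GSAV-EI1 with `e^{−τL}` replaced by
`(I + τL)^{−1}`). -/
def SAV1step (M : ℕ) [NeZero M] (h ε κ τ : ℝ) (f F σ : ℝ → ℝ) (us : GridFun M × ℝ) :
    GridFun M × ℝ :=
  let g0 := gFun M h F σ us.1 us.2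
  let Lk := Lkappa M h ε κ g0
  let u1 := (Ring.inverse ((1 : GridFun M →L[ℝ] GridFun M) + τ • Lk))
      (us.1 + τ • Nkappa M h κ g0 f F σ us.1 us.2)
  (u1, us.2 - g0 * gridInner M h (fun p => f (us.1 p)) (u1 - us.1))

/-- The stabilized generalized-SAV iterates `(uⁿ, sⁿ)`. -/
def SAV1 (M : ℕ) [NeZero M] (h ε κ τ : ℝ) (f F σ : ℝ → ℝ) (uinit : GridFun M) :
    ℕ → GridFun M × ℝ
  | 0 => (uinit, E1h M h F uinit)
  | n + 1 => SAV1step M h ε κ τ f F σ (SAV1 M h ε κ τ f F σ uinit n)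

/-! The modified energy `𝓔_h(uⁿ, sⁿ) = (ε²/2)‖∇_h uⁿ‖² + sⁿ` is non-increasing along both the
GSAV-EI1 prediction and the GSAV-EI2 correction; since `𝓔_h(u⁰, s⁰) = E_h(u_init)` and the gradient
term is nonnegative, `sⁿ` and `s̃ⁿ⁺¹` stay below `E_h(u_init)`.

Each step has the form `u₁ = e^{-τL} u + φ N` with `φ = ∫₀^τ e^{-(τ-θ)L} dθ` and `L` self-adjoint
for the discrete inner product. Then `Lφ = 1 - e^{-τL}` gives `u₁ - u = φ w` with `w = N - L u`,
and `⟨w, u₁ - u⟩ - ⟨L(u₁ - u), u₁ - u⟩ = ⟨φ e^{-τL} w, w⟩ ≥ 0`, because `φ e^{-τL}` is an integral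
of exponentials of a self-adjoint operator, each a square `e^{sL/2} e^{sL/2}`. For
`L = κ g I - ε² Δ_h` with `κ g ≥ 0` and `-⟨Δ_h e, e⟩ = ‖∇_h e‖² ≥ 0`, the update of `s` turns
this inequality into `𝓔_h(u₁, s₁) ≤ 𝓔_h(u, s)`. -/

open NormedSpace (exp)

section ExpIntegral

variable {𝔸 : Type*} [NormedRing 𝔸] [NormedAlgebra ℝ 𝔸]

def expIntegral (τ : ℝ) (x : 𝔸) : 𝔸 :=
  ∫ θ in (0:ℝ)..τ, exp (-((τ - θ) • x))

theorem expIntegral_eq (τ : ℝ) (x : 𝔸) :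
    expIntegral τ x = ∫ θ in (0:ℝ)..τ, exp ((θ - τ) • x) :=
  intervalIntegral.integral_congr fun θ _ => by rw [← neg_smul, neg_sub]

variable [CompleteSpace 𝔸]

theorem exp_add_smul (a b : ℝ) (x : 𝔸) : exp ((a + b) • x) = exp (a • x) * exp (b • x) := by
  -- `exp_add_of_commute` is stated for normed `ℚ`-algebras, which is not found by instance search
  let : NormedAlgebra ℚ 𝔸 := NormedAlgebra.restrictScalars ℚ ℝ 𝔸
  rw [add_smul, NormedSpace.exp_add_of_commute (((Commute.refl x).smul_left a).smul_right b)]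

theorem hasDerivAt_exp_sub_smul (x : 𝔸) (c t : ℝ) :
    HasDerivAt (fun s : ℝ => exp ((s - c) • x)) (x * exp ((t - c) • x)) t := by
  simpa using (hasDerivAt_exp_smul_const' (𝕂 := ℝ) x (t - c)).comp_sub_const t c

theorem continuous_exp_sub_smul (x : 𝔸) (c : ℝ) : Continuous fun s : ℝ => exp ((s - c) • x) :=
  continuous_iff_continuousAt.2 fun t => (hasDerivAt_exp_sub_smul x c t).continuousAt

theorem intervalIntegrable_exp_sub_smul (x : 𝔸) (τ : ℝ) :
    IntervalIntegrable (fun θ => exp ((θ - τ) • x)) MeasureTheory.volume 0 τ :=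
  (continuous_exp_sub_smul x τ).intervalIntegrable _ _

theorem mul_expIntegral (τ : ℝ) (x : 𝔸) : x * expIntegral τ x = 1 - exp (-(τ • x)) := by
  have hFTC := intervalIntegral.integral_eq_sub_of_hasDerivAt
    (fun θ _ => hasDerivAt_exp_sub_smul x τ θ)
    ((continuous_const.mul (continuous_exp_sub_smul x τ)).intervalIntegrable 0 τ)
  have hpull := (ContinuousLinearMap.mul ℝ 𝔸 x).intervalIntegral_comp_comm
    (intervalIntegrable_exp_sub_smul x τ)
  simp only [ContinuousLinearMap.mul_apply'] at hpull
  rw [expIntegral_eq, ← hpull, hFTC]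
  simp [neg_smul]

theorem commute_expIntegral (τ : ℝ) (x : 𝔸) : Commute x (expIntegral τ x) := by
  have hleft := (ContinuousLinearMap.mul ℝ 𝔸 x).intervalIntegral_comp_comm
    (intervalIntegrable_exp_sub_smul x τ)
  have hright := ((ContinuousLinearMap.mul ℝ 𝔸).flip x).intervalIntegral_comp_comm
    (intervalIntegrable_exp_sub_smul x τ)
  simp only [ContinuousLinearMap.flip_apply, ContinuousLinearMap.mul_apply'] at hleft hright
  rw [Commute, SemiconjBy, expIntegral_eq, ← hleft, ← hright]
  exact intervalIntegral.integral_congr fun θ _ =>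
    (((Commute.refl x).smul_right (θ - τ)).exp_right).eq

end ExpIntegral

namespace ContinuousLinearMap

variable {V : Type*} [NormedAddCommGroup V] [NormedSpace ℝ V] [CompleteSpace V]

theorem intervalIntegrable_exp_sub_smul_apply (L : V →L[ℝ] V) (τ : ℝ) (v : V) :
    IntervalIntegrable (fun θ => exp ((θ - τ) • L) v) MeasureTheory.volume 0 τ :=
  ((continuous_exp_sub_smul L τ).clm_apply continuous_const).intervalIntegrable _ _

theorem expIntegral_apply (L : V →L[ℝ] V) (τ : ℝ) (v : V) :
    expIntegral τ L v = ∫ θ in (0:ℝ)..τ, exp ((θ - τ) • L) v := by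
  rw [expIntegral_eq, intervalIntegral_apply (intervalIntegrable_exp_sub_smul L τ)]

end ContinuousLinearMap

namespace LinearMap.BilinForm

variable {V : Type*} [NormedAddCommGroup V] [NormedSpace ℝ V] {B : LinearMap.BilinForm ℝ V}

theorem isSelfAdjoint_smul {T : V →L[ℝ] V} (hT : B.IsSelfAdjoint T) (c : ℝ) :
    B.IsSelfAdjoint ⇑(c • T) := fun x y => by
  simp [hT x y]

theorem isSelfAdjoint_pow {T : V →L[ℝ] V} (hT : B.IsSelfAdjoint T) :
    ∀ n : ℕ, B.IsSelfAdjoint ⇑(T ^ n)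
  | 0 => fun x y => by simp
  | n + 1 => fun x y => by
    rw [pow_succ, mul_apply_eq_comp, isSelfAdjoint_pow hT n, hT, ← mul_apply_eq_comp,
      ← pow_succ', pow_succ]

variable [FiniteDimensional ℝ V]

theorem isSelfAdjoint_exp {T : V →L[ℝ] V} (hT : B.IsSelfAdjoint T) :
    B.IsSelfAdjoint ⇑(exp T) := by
  let S : Submodule ℝ (V →L[ℝ] V) := B.selfAdjointSubmodule.comap (ContinuousLinearMap.coeLM ℝ)
  change exp T ∈ S
  rw [NormedSpace.exp_eq_tsum ℝ]
  exact tsum_mem (Submodule.closed_of_finiteDimensional S) fun n =>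
    S.smul_mem _ (B.isSelfAdjoint_pow hT n)

theorem exp_apply_nonneg (hB : B.IsNonneg) {T : V →L[ℝ] V} (hT : B.IsSelfAdjoint T) (v : V) :
    0 ≤ B (exp T v) v := by
  have hsplit : exp T = exp ((1 / 2 : ℝ) • T) * exp ((1 / 2 : ℝ) • T) := by
    rw [← exp_add_smul (1 / 2) (1 / 2) T]; norm_num
  rw [hsplit, mul_apply_eq_comp, B.isSelfAdjoint_exp (B.isSelfAdjoint_smul hT _)]
  exact hB.nonneg _

theorem intervalIntegral_apply_left {f : ℝ → V} {a b : ℝ}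
    (hf : IntervalIntegrable f MeasureTheory.volume a b) (w : V) :
    B (∫ θ in a..b, f θ) w = ∫ θ in a..b, B (f θ) w :=
  ((LinearMap.toContinuousLinearMap (B.flip w)).intervalIntegral_comp_comm hf).symm

theorem intervalIntegral_apply_right {f : ℝ → V} {a b : ℝ}
    (hf : IntervalIntegrable f MeasureTheory.volume a b) (v : V) :
    B v (∫ θ in a..b, f θ) = ∫ θ in a..b, B v (f θ) :=
  ((LinearMap.toContinuousLinearMap (B v)).intervalIntegral_comp_comm hf).symm

variable {L : V →L[ℝ] V}

theorem isSelfAdjoint_expIntegral (hL : B.IsSelfAdjoint L) (τ : ℝ) :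
    B.IsSelfAdjoint ⇑(expIntegral τ L) := fun v w => by
  rw [L.expIntegral_apply τ, L.expIntegral_apply τ,
    intervalIntegral_apply_left (L.intervalIntegrable_exp_sub_smul_apply τ v),
    intervalIntegral_apply_right (L.intervalIntegrable_exp_sub_smul_apply τ w)]
  exact intervalIntegral.integral_congr fun θ _ =>
    B.isSelfAdjoint_exp (B.isSelfAdjoint_smul hL _) v w

theorem expIntegral_exp_apply_nonneg (hB : B.IsNonneg) (hL : B.IsSelfAdjoint L) {τ : ℝ}
    (hτ : 0 ≤ τ) (w : V) : 0 ≤ B (expIntegral τ L (exp (-(τ • L)) w)) w := by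
  rw [L.expIntegral_apply τ,
    intervalIntegral_apply_left (L.intervalIntegrable_exp_sub_smul_apply τ _)]
  refine intervalIntegral.integral_nonneg hτ fun θ _ => ?_
  rw [← mul_apply_eq_comp, ← neg_smul, ← exp_add_smul (θ - τ) (-τ) L]
  exact B.exp_apply_nonneg hB (B.isSelfAdjoint_smul hL _) w

theorem apply_expIntegrator_sub_le (hB : B.IsNonneg) (hL : B.IsSelfAdjoint L) {τ : ℝ}
    (hτ : 0 ≤ τ) {u N u₁ : V} (hu₁ : u₁ = exp (-(τ • L)) u + expIntegral τ L N) :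
    B (L (u₁ - u)) (u₁ - u) ≤ B (N - L u) (u₁ - u) := by
  set A := expIntegral τ L
  set E := exp (-(τ • L))
  have hLA : ∀ v, L (A v) = v - E v := fun v => by
    rw [← mul_apply_eq_comp, mul_expIntegral]; rfl
  have hAL : ∀ v, A (L v) = v - E v := fun v => by
    rw [← mul_apply_eq_comp, ← (commute_expIntegral τ L).eq, mul_apply_eq_comp, hLA]
  have he : u₁ - u = A (N - L u) := by rw [map_sub, hAL, hu₁]; abel
  rw [he, hLA, LinearMap.map_sub₂, sub_le_self_iff, ← isSelfAdjoint_expIntegral hL τ]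
  exact expIntegral_exp_apply_nonneg hB hL hτ _

end LinearMap.BilinForm

theorem Equiv.Perm.sum_secondDiff_mul {ι R : Type*} [Fintype ι] [CommRing R] (s : Equiv.Perm ι)
    (f g : ι → R) :
    ∑ i, (f (s i) + f (s.symm i) - 2 * f i) * g i = -∑ i, (f (s i) - f i) * (g (s i) - g i) := by
  have hback : ∑ i, f (s.symm i) * g i = ∑ i, f i * g (s i) :=
    (Equiv.sum_comp s fun i => f (s.symm i) * g i).symm.trans (by simp)
  have hdiag : ∑ i, f (s i) * g (s i) = ∑ i, f i * g i := Equiv.sum_comp s fun i => f i * g i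
  have hL : ∑ i, (f (s i) + f (s.symm i) - 2 * f i) * g i
      = ∑ i, f (s i) * g i + ∑ i, f (s.symm i) * g i - 2 * ∑ i, f i * g i := by
    simp only [add_mul, sub_mul, Finset.sum_add_distrib, Finset.sum_sub_distrib, Finset.mul_sum,
      mul_assoc]
  have hR : ∑ i, (f (s i) - f i) * (g (s i) - g i)
      = ∑ i, f (s i) * g (s i) - ∑ i, f (s i) * g i - ∑ i, f i * g (s i) + ∑ i, f i * g i := by
    simp only [mul_sub, sub_mul, Finset.sum_sub_distrib]
    ring
  rw [hL, hR, hback, hdiag]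
  ring

section Grid

variable {M : ℕ} {h : ℝ}

def gridForm (M : ℕ) (h : ℝ) : LinearMap.BilinForm ℝ (GridFun M) :=
  LinearMap.mk₂ ℝ (gridInner M h)
    (fun v v' w => by simp only [gridInner, Pi.add_apply, add_mul, Finset.sum_add_distrib, mul_add])
    (fun c v w => by
      simp only [gridInner, Pi.smul_apply, smul_eq_mul, Finset.mul_sum]
      exact Finset.sum_congr rfl fun _ _ => by ring)
    (fun v w w' => by simp only [gridInner, Pi.add_apply, mul_add, Finset.sum_add_distrib])
    (fun c v w => by
      simp only [gridInner, Pi.smul_apply, smul_eq_mul, Finset.mul_sum]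
      exact Finset.sum_congr rfl fun _ _ => by ring)

@[simp]
theorem gridForm_apply (v w : GridFun M) : gridForm M h v w = gridInner M h v w := rfl

theorem gridInner_comm (v w : GridFun M) : gridInner M h v w = gridInner M h w v := by
  simp only [gridInner, mul_comm (v _)]

theorem gridInner_self_nonneg (v : GridFun M) : 0 ≤ gridInner M h v v :=
  mul_nonneg (sq_nonneg h) (Finset.sum_nonneg fun _ _ => mul_self_nonneg _)

theorem gridForm_isNonneg : (gridForm M h).IsNonneg :=
  ⟨gridInner_self_nonneg⟩

theorem dLap_apply [NeZero M] (v : GridFun M) (p : Fin M × Fin M) :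
    dLap M h v p = (v (p.1 + 1, p.2) + v (p.1 - 1, p.2) + v (p.1, p.2 + 1) + v (p.1, p.2 - 1)
      - 4 * v p) / h ^ 2 :=
  rfl

/-- Discrete Green formula `⟨Δ_h v, w⟩ = -⟨∇_h v, ∇_h w⟩`, by periodic summation by parts. -/
theorem gridInner_dLap [NeZero M] (v w : GridFun M) :
    gridInner M h (dLap M h v) w = -(h ^ 2 * ∑ p : Fin M × Fin M,
      ((v (p.1 + 1, p.2) - v p) / h * ((w (p.1 + 1, p.2) - w p) / h)
        + (v (p.1, p.2 + 1) - v p) / h * ((w (p.1, p.2 + 1) - w p) / h))) := by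
  have h₁ : ∑ p : Fin M × Fin M, (v (p.1 + 1, p.2) + v (p.1 - 1, p.2) - 2 * v p) * w p
      = -∑ p : Fin M × Fin M, (v (p.1 + 1, p.2) - v p) * (w (p.1 + 1, p.2) - w p) := by
    simpa [Prod.map, sub_eq_add_neg] using Equiv.Perm.sum_secondDiff_mul
      ((Equiv.addRight (1 : Fin M)).prodCongr (Equiv.refl (Fin M))) v w
  have h₂ : ∑ p : Fin M × Fin M, (v (p.1, p.2 + 1) + v (p.1, p.2 - 1) - 2 * v p) * w p
      = -∑ p : Fin M × Fin M, (v (p.1, p.2 + 1) - v p) * (w (p.1, p.2 + 1) - w p) := by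
    simpa [Prod.map, sub_eq_add_neg] using Equiv.Perm.sum_secondDiff_mul
      ((Equiv.refl (Fin M)).prodCongr (Equiv.addRight (1 : Fin M))) v w
  have hlap : gridInner M h (dLap M h v) w = h ^ 2 * ((∑ p : Fin M × Fin M,
      (v (p.1 + 1, p.2) + v (p.1 - 1, p.2) - 2 * v p) * w p
        + ∑ p : Fin M × Fin M, (v (p.1, p.2 + 1) + v (p.1, p.2 - 1) - 2 * v p) * w p) / h ^ 2) := by
    rw [← Finset.sum_add_distrib, Finset.sum_div]
    exact congrArg _ (Finset.sum_congr rfl fun p _ => by rw [dLap_apply]; ring)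
  have hgrad : ∑ p : Fin M × Fin M,
      ((v (p.1 + 1, p.2) - v p) / h * ((w (p.1 + 1, p.2) - w p) / h)
        + (v (p.1, p.2 + 1) - v p) / h * ((w (p.1, p.2 + 1) - w p) / h))
      = (∑ p : Fin M × Fin M, (v (p.1 + 1, p.2) - v p) * (w (p.1 + 1, p.2) - w p)
        + ∑ p : Fin M × Fin M, (v (p.1, p.2 + 1) - v p) * (w (p.1, p.2 + 1) - w p)) / h ^ 2 := by
    rw [← Finset.sum_add_distrib, Finset.sum_div]
    exact Finset.sum_congr rfl fun p _ => by ring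
  rw [hlap, hgrad, h₁, h₂]
  ring

variable [NeZero M]

theorem isSelfAdjoint_dLap : (gridForm M h).IsSelfAdjoint (dLap M h) := fun v w => by
  rw [gridForm_apply, gridForm_apply, gridInner_comm v, gridInner_dLap, gridInner_dLap]
  simp only [mul_comm ((v _ - v _) / h)]

theorem gradE_eq (ε : ℝ) (v : GridFun M) :
    gradE M h ε v = -(ε ^ 2 / 2) * gridInner M h (dLap M h v) v := by
  rw [gridInner_dLap, gradE]
  simp only [sq ((_ - _) / h)]
  ring

theorem gradE_nonneg (ε : ℝ) (v : GridFun M) : 0 ≤ gradE M h ε v := by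
  unfold gradE
  positivity

theorem gridInner_dLap_self_nonpos (v : GridFun M) : gridInner M h (dLap M h v) v ≤ 0 := by
  have := gradE_nonneg (h := h) 1 v
  rw [gradE_eq] at this
  linarith

theorem gradE_add (ε : ℝ) (u e : GridFun M) :
    gradE M h ε (u + e) = gradE M h ε u - ε ^ 2 * gridInner M h (dLap M h u) e
      - ε ^ 2 / 2 * gridInner M h (dLap M h e) e := by
  have hcross : gridInner M h (dLap M h e) u = gridInner M h (dLap M h u) e := by
    rw [← gridForm_apply, isSelfAdjoint_dLap, gridForm_apply, gridInner_comm]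
  simp only [gradE_eq, map_add, ← gridForm_apply, LinearMap.add_apply] at hcross ⊢
  rw [hcross]
  ring

end Grid

section Scheme

variable {M : ℕ} {h ε κ τ : ℝ} {f F σ : ℝ → ℝ}

theorem gFun_pos (hσ : ∀ x, 0 < σ x) (v : GridFun M) (r : ℝ) : 0 < gFun M h F σ v r :=
  div_pos (hσ _) (hσ _)

theorem gFun_mul_gridInner (κ g : ℝ) (v w : GridFun M) (r : ℝ) :
    gFun M h F σ v r * gridInner M h (fun p => f (v p)) w
      = gridInner M h (Nkappa M h κ g f F σ v r - (κ * g) • v) w := by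
  simp only [gridInner, Finset.mul_sum, Nkappa, Pi.sub_apply, Pi.smul_apply, smul_eq_mul]
  exact Finset.sum_congr rfl fun _ _ => by ring

variable [NeZero M]

theorem Lkappa_apply (g : ℝ) (v : GridFun M) :
    Lkappa M h ε κ g v = (κ * g) • v - ε ^ 2 • dLap M h v :=
  rfl

theorem isSelfAdjoint_Lkappa (g : ℝ) :
    (gridForm M h).IsSelfAdjoint (Lkappa M h ε κ g) := fun v w => by
  simp only [Lkappa_apply, map_sub, map_smul, LinearMap.sub_apply, LinearMap.smul_apply,
    isSelfAdjoint_dLap v w]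

theorem modE_le_of_expIntegrator_step {g : ℝ} (hκg : 0 ≤ κ * g) (hτ : 0 ≤ τ)
    {u N u₁ : GridFun M} {s s₁ : ℝ}
    (hu₁ : u₁ = exp (-(τ • Lkappa M h ε κ g)) u + expIntegral τ (Lkappa M h ε κ g) N)
    (hs₁ : s₁ ≤ s - gridInner M h (N - (κ * g) • u) (u₁ - u)
      + κ * g / 2 * gridInner M h (u₁ - u) (u₁ - u)) :
    modE M h ε u₁ s₁ ≤ modE M h ε u s := by
  have hdiss := (gridForm M h).apply_expIntegrator_sub_le gridForm_isNonneg
    (isSelfAdjoint_Lkappa g) hτ hu₁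
  set e := u₁ - u
  have hgrad : gradE M h ε u₁ = gradE M h ε u - ε ^ 2 * gridInner M h (dLap M h u) e
      - ε ^ 2 / 2 * gridInner M h (dLap M h e) e := by
    rw [← gradE_add, add_sub_cancel]
  have hΔe := gridInner_dLap_self_nonpos (h := h) e
  have hee := gridInner_self_nonneg (h := h) e
  simp only [← gridForm_apply] at hs₁
  simp only [Lkappa_apply, map_sub, map_smul, LinearMap.sub_apply, LinearMap.smul_apply,
    smul_eq_mul, gridForm_apply] at hdiss hs₁
  unfold modE
  linarith [mul_nonneg hκg hee, mul_nonpos_of_nonneg_of_nonpos (sq_nonneg ε) hΔe]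

theorem modE_EI1step_le (hκ : 0 ≤ κ) (hτ : 0 ≤ τ) (hσ : ∀ x, 0 < σ x) (us : GridFun M × ℝ) :
    modE M h ε (EI1step M h ε κ τ f F σ us).1 (EI1step M h ε κ τ f F σ us).2
      ≤ modE M h ε us.1 us.2 := by
  set g := gFun M h F σ us.1 us.2
  have hκg : 0 ≤ κ * g := mul_nonneg hκ (gFun_pos hσ _ _).le
  refine modE_le_of_expIntegrator_step hκg hτ rfl ?_
  set e := (EI1step M h ε κ τ f F σ us).1 - us.1
  change us.2 - g * gridInner M h (fun p => f (us.1 p)) e ≤ _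
  rw [gFun_mul_gridInner κ g]
  linarith [mul_nonneg hκg (gridInner_self_nonneg (h := h) e)]

theorem modE_EI2step_le (hκ : 0 ≤ κ) (hτ : 0 ≤ τ) (hσ : ∀ x, 0 < σ x) (us : GridFun M × ℝ) :
    modE M h ε (EI2step M h ε κ τ f F σ us).1 (EI2step M h ε κ τ f F σ us).2
      ≤ modE M h ε us.1 us.2 := by
  set m := EI2half M h ε κ τ f F σ us
  set g := gFun M h F σ m.1 m.2
  refine modE_le_of_expIntegrator_step (g := g) (mul_nonneg hκ (gFun_pos hσ _ _).le) hτ rfl ?_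
  set t := EI1step M h ε κ τ f F σ us
  set u₁ := (EI2step M h ε κ τ f F σ us).1
  change us.2 - g * gridInner M h (fun p => f (m.1 p)) (u₁ - us.1)
    + κ / 2 * g * gridInner M h (u₁ - t.1) (u₁ - us.1) ≤ _
  rw [gFun_mul_gridInner κ g]
  set N := Nkappa M h κ g f F σ m.1 m.2
  have hvec : N - (κ * g) • m.1 - (κ / 2 * g) • (u₁ - t.1)
      = N - (κ * g) • us.1 - (κ * g / 2) • (u₁ - us.1) := by
    rw [show m.1 = (1 / 2 : ℝ) • (us.1 + t.1) from rfl]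
    module
  have key := congrArg (fun x => gridInner M h x (u₁ - us.1)) hvec
  simp only [← gridForm_apply, LinearMap.map_sub₂, LinearMap.map_smul₂, smul_eq_mul] at key ⊢
  linarith

end Scheme

theorem stmt_12_general (M : ℕ) [NeZero M] (h ε : ℝ)
    (f F σ : ℝ → ℝ) (hσpos : ∀ x, 0 < σ x)
    (κ : ℝ) (hκ : 0 < κ)
    (τ : ℝ) (hτ : 0 < τ) (uinit : GridFun M) :
    ∀ n : ℕ,
      (EI2 M h ε κ τ f F σ uinit n).2 ≤ Eh M h ε F uinit ∧
      (EI1step M h ε κ τ f F σ (EI2 M h ε κ τ f F σ uinit n)).2 ≤ Eh M h ε F uinit := by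
  have hdecay : ∀ n, modE M h ε (EI2 M h ε κ τ f F σ uinit n).1 (EI2 M h ε κ τ f F σ uinit n).2
      ≤ Eh M h ε F uinit := by
    intro n
    induction n with
    | zero => exact le_rfl
    | succ n ih => exact (modE_EI2step_le hκ.le hτ.le hσpos _).trans ih
  intro n
  constructor
  · exact (le_add_of_nonneg_left (gradE_nonneg ε _)).trans (hdecay n)
  · exact (le_add_of_nonneg_left (gradE_nonneg ε _)).trans
      ((modE_EI1step_le hκ.le hτ.le hσpos _).trans (hdecay n))

/-- For any `κ > 0`, `τ > 0`, initial grid function, and `n ≥ 0`, the GSAV-EI2 iterates satisfy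
`sⁿ ≤ E_h(u_init)` and the prediction satisfies `s̃^{n+1} ≤ E_h(u_init)`. -/
theorem stmt_12 (M : ℕ) [NeZero M] (L h ε : ℝ) (hL : 0 < L) (hh : h = L / M) (hε : 0 < ε)
    (f F σ : ℝ → ℝ) (hF : ∀ x, HasDerivAt F (-f x) x)
    (hσ : ContDiff ℝ 1 σ) (hσpos : ∀ x, 0 < σ x) (hσmono : ∀ x, 0 ≤ deriv σ x)
    (κ : ℝ) (hκ : 0 < κ) (hf : ContDiff ℝ 1 f)
    (τ : ℝ) (hτ : 0 < τ) (uinit : GridFun M) :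
    ∀ n : ℕ,
      (EI2 M h ε κ τ f F σ uinit n).2 ≤ Eh M h ε F uinit ∧
      (EI1step M h ε κ τ f F σ (EI2 M h ε κ τ f F σ uinit n)).2 ≤ Eh M h ε F uinit :=
  stmt_12_general M h ε f F σ hσpos κ hκ τ hτ uinit
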